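/- Let D be a finite set of positive integers, q : D → ℝ with q_k > 0 for all k ∈ D and Σ_{k∈D} q_k = 1, and suppose the per-unit costs are homogeneous: c_k = c > 0 for every k ∈ D. Let δ* be a degree-based equilibrium with v(δ*) > 0. If δ*_j = 0 for some j ∈ D, then δ*_k = 0 for every k ∈ D with k > j. -/
import Mathlib

open Classical in
/-- The endemic-state neighbor infection probability `v(δ)`: a solution `v ∈ (0,1]` of
the consistency equation `Σ_{i∈D} i q_i / (δ_i + i v) = 1` if one exists (it is then
unique for nonnegative curing rates), and `0` otherwise. -/
noncomputable def vstar (D : Finset ℕ) (q : ℕ → ℝ) (δ : ℕ → ℝ) : ℝ :=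
  if h : ∃ v : ℝ, v ∈ Set.Ioc (0 : ℝ) 1 ∧
      ∑ i ∈ D, (i : ℝ) * q i / (δ i + (i : ℝ) * v) = 1 then h.choose else 0

/-- The steady-state infection probability of degree-`k` nodes:
`x_k(δ) = k v(δ) / (δ_k + k v(δ))` if `v(δ) > 0`, and `0` otherwise. -/
noncomputable def xinf (D : Finset ℕ) (q : ℕ → ℝ) (δ : ℕ → ℝ) (k : ℕ) : ℝ :=
  if 0 < vstar D q δ then (k : ℝ) * vstar D q δ / (δ k + (k : ℝ) * vstar D q δ) else 0

/-- The expected cost of degree-`k` nodes with homogeneous per-unit cost `c`: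
`J_k(δ) = x_k(δ) + c δ_k`. -/
noncomputable def cost (D : Finset ℕ) (q : ℕ → ℝ) (c : ℝ) (δ : ℕ → ℝ) (k : ℕ) : ℝ :=
  xinf D q δ k + c * δ k

lemma vstar_eq_of_pos (D : Finset ℕ) (q δ : ℕ → ℝ) (h : 0 < vstar D q δ) :
    vstar D q δ ∈ Set.Ioc (0:ℝ) 1 ∧
      ∑ i ∈ D, (i : ℝ) * q i / (δ i + (i : ℝ) * vstar D q δ) = 1 := by
  unfold vstar at h ⊢
  by_cases hex : ∃ v : ℝ, v ∈ Set.Ioc (0:ℝ) 1 ∧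
      ∑ i ∈ D, (i : ℝ) * q i / (δ i + (i : ℝ) * v) = 1
  · rw [dif_pos hex] at h ⊢
    exact hex.choose_spec
  · rw [dif_neg hex] at h
    exact absurd h (lt_irrefl _)

lemma vstar_pos_of_exists (D : Finset ℕ) (q δ : ℕ → ℝ)
    (h : ∃ v : ℝ, v ∈ Set.Ioc (0:ℝ) 1 ∧
      ∑ i ∈ D, (i : ℝ) * q i / (δ i + (i : ℝ) * v) = 1) :
    0 < vstar D q δ := by
  unfold vstar
  rw [dif_pos h]
  exact h.choose_spec.1.1

lemma exists_v_of_zero (D : Finset ℕ) (hD : ∀ k ∈ D, 0 < k) (q δ : ℕ → ℝ)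
    (hq : ∀ k ∈ D, 0 < q k) (hqsum : ∑ k ∈ D, q k = 1)
    (hδ : ∀ i ∈ D, 0 ≤ δ i) (j : ℕ) (hj : j ∈ D) (hδj : δ j = 0) :
    ∃ v : ℝ, v ∈ Set.Ioc (0:ℝ) 1 ∧
      ∑ i ∈ D, (i : ℝ) * q i / (δ i + (i : ℝ) * v) = 1 := by
  set ε := q j with hε
  have hεpos : 0 < ε := hq j hj
  have hε1 : ε ≤ 1 := by
    rw [← hqsum]
    exact Finset.single_le_sum (fun i hi => (hq i hi).le) hj
  set f : ℝ → ℝ := fun w => ∑ i ∈ D, (i : ℝ) * q i / (δ i + (i : ℝ) * w) with hf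
  have hcont : ContinuousOn f (Set.Icc ε 1) := by
    apply continuousOn_finset_sum
    intro i hi
    apply ContinuousOn.div continuousOn_const
    · exact continuousOn_const.add (continuousOn_const.mul continuousOn_id)
    · intro w hw
      have h1 : 0 ≤ δ i := hδ i hi
      have h2 : (1:ℝ) ≤ (i:ℝ) := by exact_mod_cast hD i hi
      nlinarith [hw.1, hεpos]
  have hf1 : f 1 ≤ 1 := by
    have hle : f 1 ≤ ∑ i ∈ D, q i := by
      apply Finset.sum_le_sum
      intro i hi
      have h1 : 0 ≤ δ i := hδ i hi
      have h2 : (1:ℝ) ≤ (i:ℝ) := by exact_mod_cast hD i hi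
      have h3 : 0 < q i := hq i hi
      rw [div_le_iff₀ (by nlinarith)]
      nlinarith
    rw [hqsum] at hle
    exact hle
  have hfε : 1 ≤ f ε := by
    have hterm : (j : ℝ) * q j / (δ j + (j : ℝ) * ε) = 1 := by
      rw [hδj, zero_add]
      have h2 : (0:ℝ) < (j:ℝ) := by exact_mod_cast hD j hj
      rw [div_self (mul_pos h2 hεpos).ne']
    rw [hf]
    calc (1:ℝ) = (j : ℝ) * q j / (δ j + (j : ℝ) * ε) := hterm.symm
      _ ≤ ∑ i ∈ D, (i : ℝ) * q i / (δ i + (i : ℝ) * ε) := by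
          apply Finset.single_le_sum _ hj
          intro i hi
          have h1 : 0 ≤ δ i := hδ i hi
          have h2 : (0:ℝ) < (i:ℝ) := by exact_mod_cast hD i hi
          have h3 : 0 < q i := hq i hi
          positivity
  have hsub := intermediate_value_Icc' hε1 hcont
  obtain ⟨w, hw, hfw⟩ := hsub ⟨hf1, hfε⟩
  exact ⟨w, ⟨lt_of_lt_of_le hεpos hw.1, hw.2⟩, hfw⟩

set_option maxHeartbeats 1000000 in
/-- With homogeneous per-unit curing costs `c_k = c > 0`, at any
degree-based equilibrium `δ*` with `v(δ*) > 0`: if the equilibrium curing rate of some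
degree `j ∈ D` is `0`, then the equilibrium curing rate of every higher degree `k ∈ D`
(`k > j`) is also `0`. -/
theorem dbe_zero_upward_closed_in_degree
    (D : Finset ℕ) (hD : ∀ k ∈ D, 0 < k)
    (q : ℕ → ℝ) (hq : ∀ k ∈ D, 0 < q k) (hqsum : ∑ k ∈ D, q k = 1)
    (c : ℝ) (hc : 0 < c)
    (δstar : ℕ → ℝ)
    (hfeas : ∀ k ∈ D, δstar k ∈ Set.Icc (0 : ℝ) (1 / c))
    (hdbe : ∀ k ∈ D, ∀ s ∈ Set.Icc (0 : ℝ) (1 / c),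
      cost D q c δstar k ≤ cost D q c (Function.update δstar k s) k)
    (hv : 0 < vstar D q δstar) :
    ∀ j ∈ D, δstar j = 0 → ∀ k ∈ D, j < k → δstar k = 0 := by
  intro j hj hδj k hk hjk
  by_contra hne
  have hd : 0 < δstar k := lt_of_le_of_ne (hfeas k hk).1 (Ne.symm hne)
  have hjk' : j ≠ k := Nat.ne_of_lt hjk
  have hkpos : (0:ℝ) < (k:ℝ) := by exact_mod_cast hD k hk
  have hjpos : (0:ℝ) < (j:ℝ) := by exact_mod_cast hD j hj
  have hjklt : (j:ℝ) < (k:ℝ) := by exact_mod_cast hjk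
  obtain ⟨hvmem, hveq⟩ := vstar_eq_of_pos D q δstar hv
  set v := vstar D q δstar with hvdef
  set d := δstar k with hdk
  -- Step 1: deviation of k to 0
  set δ'' := Function.update δstar k 0 with hδ''def
  have hδ''nn : ∀ i ∈ D, 0 ≤ δ'' i := by
    intro i hi
    rw [hδ''def, Function.update_apply]
    split_ifs
    · exact le_rfl
    · exact (hfeas i hi).1
  have hδ''j : δ'' j = 0 := by
    rw [hδ''def, Function.update_apply, if_neg hjk', hδj]
  have hex'' := exists_v_of_zero D hD q δ'' hq hqsum hδ''nn j hj hδ''j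
  have hv'' := vstar_pos_of_exists D q δ'' hex''
  have hcostdev : cost D q c δ'' k = 1 := by
    unfold cost xinf
    rw [if_pos hv'']
    have hδ''k : δ'' k = 0 := by rw [hδ''def, Function.update_self]
    rw [hδ''k, zero_add, mul_zero, add_zero, div_self (mul_pos hkpos hv'').ne']
  have hcostk : cost D q c δstar k = (k:ℝ) * v / (d + (k:ℝ) * v) + c * d := by
    unfold cost xinf
    rw [if_pos hv]
  have hk1 : (k:ℝ) * v / (d + (k:ℝ) * v) + c * d ≤ 1 := by
    have := hdbe k hk 0 ⟨le_refl 0, (one_div_pos.mpr hc).le⟩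
    rw [hcostk, ← hδ''def, hcostdev] at this
    exact this
  -- Step 2: deviation of j to d
  set δ' := Function.update δstar j d with hδ'def
  have hcostj : cost D q c δstar j = 1 := by
    unfold cost xinf
    rw [if_pos hv, hδj, zero_add, mul_zero, add_zero, div_self (mul_pos hjpos hv).ne']
  have hj1 : (1:ℝ) ≤ xinf D q δ' j + c * d := by
    have := hdbe j hj d (hfeas k hk)
    rw [hcostj] at this
    unfold cost at this
    rw [← hδ'def] at this
    have hδ'j : δ' j = d := by rw [hδ'def, Function.update_self]
    rw [hδ'j] at this
    exact this
  -- Step 3: xinf δ' j < k v / (d + k v)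
  have hkv : (0:ℝ) < (k:ℝ) * v / (d + (k:ℝ) * v) := by
    apply div_pos (mul_pos hkpos hv)
    nlinarith [mul_pos hkpos hv]
  have hstep3 : xinf D q δ' j < (k:ℝ) * v / (d + (k:ℝ) * v) := by
    unfold xinf
    split_ifs with hv'
    · obtain ⟨hv'mem, hv'eq⟩ := vstar_eq_of_pos D q δ' hv'
      set v' := vstar D q δ' with hv'def
      have hδ'j : δ' j = d := by rw [hδ'def, Function.update_self]
      have hlt : v' < v := by
        by_contra hge
        push_neg at hge  -- v ≤ v'
        have hSle : ∑ i ∈ D, (i:ℝ) * q i / (δ' i + (i:ℝ) * v') ≤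
            ∑ i ∈ D, (i:ℝ) * q i / (δ' i + (i:ℝ) * v) := by
          apply Finset.sum_le_sum
          intro i hi
          have h1 : 0 ≤ δ' i := by
            rw [hδ'def, Function.update_apply]
            split_ifs
            · exact hd.le
            · exact (hfeas i hi).1
          have h2 : (0:ℝ) < (i:ℝ) := by exact_mod_cast hD i hi
          have h3 : 0 < q i := hq i hi
          have h4 : 0 < v := hvmem.1
          apply div_le_div_of_nonneg_left (mul_nonneg h2.le h3.le) (by nlinarith)
          nlinarith
        have hSlt : ∑ i ∈ D, (i:ℝ) * q i / (δ' i + (i:ℝ) * v) <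
            ∑ i ∈ D, (i:ℝ) * q i / (δstar i + (i:ℝ) * v) := by
          apply Finset.sum_lt_sum
          · intro i hi
            rw [hδ'def, Function.update_apply]
            split_ifs with h
            · subst h
              rw [hδj]
              have h1 : (0:ℝ) < v := hvmem.1
              have h2 : (0:ℝ) < (i:ℝ) := by exact_mod_cast hD i hi
              have h3 : 0 < q i := hq i hi
              apply div_le_div_of_nonneg_left (mul_nonneg h2.le h3.le)
                (by nlinarith) (by nlinarith)
            · exact le_rfl
          · refine ⟨j, hj, ?_⟩
            rw [hδ'j, hδj, zero_add]
            have h1 : (0:ℝ) < v := hvmem.1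
            apply div_lt_div_of_pos_left (mul_pos hjpos (hq j hj))
              (mul_pos hjpos h1)
            nlinarith
        rw [hveq] at hSlt
        rw [hv'eq] at hSle
        linarith
      rw [hδ'j]
      have h1 : (0:ℝ) < v' := hv'mem.1
      have h2 : (0:ℝ) < v := hvmem.1
      rw [div_lt_div_iff₀ (by nlinarith [mul_pos hjpos h1]) (by nlinarith [mul_pos hkpos h2])]
      have h3 : (j:ℝ) * v' < (k:ℝ) * v := by nlinarith
      nlinarith [mul_lt_mul_of_pos_left h3 hd]
    · exact hkv
  linarith
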